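/- Suppose Σ_{j∈Λ*_p} r_j + Σ_{j,k∈Λ*_p} a_{j,k} > 0, and let μ_N be the unique stationary state of L_N on Ω_{N,p} with ρ_N(k) = E_{μ_N}[η_k]. Then for every 0 ≤ k < N one has ρ_N(k) = (k/N)·β + ((N−k)/N)·ρ_N(0). -/

import Mathlib

/-! The boundary dynamics only flips and stirs the sites `≤ 0`, so on the occupation of a bulk
site `1 ≤ k ≤ N - 1` the generator acts as the discrete Laplacian
`L_N η_k = η_{k-1} + η_{k+1} - 2 η_k`, where `η_N` is to be read as `β`: the right reservoir
gives `η_{N-1}` the drift `β - η_{N-1}`. Integrating against a stationary state, the profile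
`ρ_N`, extended by `ρ_N(N) = β`, is discrete harmonic on `{1, …, N - 1}`, hence affine on
`{0, …, N}`. -/

open Finset Filter Topology

/-- Occupation value of a site. -/
def occ (b : Bool) : ℝ := if b then 1 else 0

/-- Flip the occupation variable at site `i`. -/
def flipCfg {m : ℕ} (η : Fin m → Bool) (i : Fin m) : Fin m → Bool :=
  Function.update η i (!(η i))

/-- Exchange the occupation variables at sites `i` and `j`. -/
def swapCfg {m : ℕ} (η : Fin m → Bool) (i j : Fin m) : Fin m → Bool :=
  fun k => η (Equiv.swap i j k)

/-- A stationary state of a generator `L` on a finite set `S`. -/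
def IsStationaryState {S : Type*} [Fintype S] (L : (S → ℝ) → S → ℝ) (μ : S → ℝ) : Prop :=
  (∀ x, 0 ≤ μ x) ∧ (∑ x, μ x = 1) ∧ ∀ f : S → ℝ, ∑ x, μ x * L f x = 0

/-- Expectation of `g` under the (finitely supported) measure `μ`. -/
def expVal {S : Type*} [Fintype S] (μ : S → ℝ) (g : S → ℝ) : ℝ := ∑ x, μ x * g x

/- The sites of `Λ_{N,p} = {-p, …, N-1}` are indexed by `Fin (N+p)`, the index
`i` corresponding to the site `i - p`; the sites of `Λ*_p = {-p, …, 0}` are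
indexed by `Fin (p+1)` in the same way. -/

/-- Embedding of `Λ*_p` into `Λ_{N,p}`. -/
def emb (N p : ℕ) (hN : 1 ≤ N) (j : Fin (p+1)) : Fin (N+p) :=
  ⟨j.1, by have := j.isLt; omega⟩

/-- Stirring on the sites `-p, …, -1` of the left boundary. -/
def LS (N p : ℕ) (hN : 1 ≤ N) (f : (Fin (N+p) → Bool) → ℝ) (η : Fin (N+p) → Bool) : ℝ :=
  ∑ i : Fin p,
    (f (swapCfg η ⟨i.1, by have := i.isLt; omega⟩ ⟨i.1 + 1, by have := i.isLt; omega⟩) - f η)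

/-- Reservoir dynamics on the left boundary. -/
def LR (N p : ℕ) (hN : 1 ≤ N) (r α : Fin (p+1) → ℝ)
    (f : (Fin (N+p) → Bool) → ℝ) (η : Fin (N+p) → Bool) : ℝ :=
  ∑ j : Fin (p+1),
    r j * (α j * (1 - occ (η (emb N p hN j))) + occ (η (emb N p hN j)) * (1 - α j)) *
      (f (flipCfg η (emb N p hN j)) - f η)

/-- Copying dynamics on the left boundary. -/
def LC (N p : ℕ) (hN : 1 ≤ N) (cR : Fin (p+1) → Fin (p+1) → ℝ)
    (f : (Fin (N+p) → Bool) → ℝ) (η : Fin (N+p) → Bool) : ℝ :=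
  ∑ j : Fin (p+1), ∑ k : Fin (p+1),
    cR j k * (occ (η (emb N p hN k)) * (1 - occ (η (emb N p hN j)))
        + occ (η (emb N p hN j)) * (1 - occ (η (emb N p hN k)))) *
      (f (flipCfg η (emb N p hN j)) - f η)

/-- Anti-copying dynamics on the left boundary. -/
def LA (N p : ℕ) (hN : 1 ≤ N) (aR : Fin (p+1) → Fin (p+1) → ℝ)
    (f : (Fin (N+p) → Bool) → ℝ) (η : Fin (N+p) → Bool) : ℝ :=
  ∑ j : Fin (p+1), ∑ k : Fin (p+1),
    aR j k * (occ (η (emb N p hN j)) * occ (η (emb N p hN k))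
        + (1 - occ (η (emb N p hN j))) * (1 - occ (η (emb N p hN k)))) *
      (f (flipCfg η (emb N p hN j)) - f η)

/-- Stirring between the sites `0` and `1`. -/
def L01 (N p : ℕ) (hN : 2 ≤ N) (f : (Fin (N+p) → Bool) → ℝ) (η : Fin (N+p) → Bool) : ℝ :=
  f (swapCfg η ⟨p, by omega⟩ ⟨p + 1, by omega⟩) - f η

/-- Symmetric exclusion on the sites `1, …, N-1` (exchanges at `(k, k+1)`,
`1 ≤ k ≤ N-2`). -/
def Lbulk (N p : ℕ) (f : (Fin (N+p) → Bool) → ℝ) (η : Fin (N+p) → Bool) : ℝ :=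
  ∑ k : Fin (N-2),
    (f (swapCfg η ⟨k.1 + p + 1, by have := k.isLt; omega⟩
          ⟨k.1 + p + 2, by have := k.isLt; omega⟩) - f η)

/-- Right reservoir at density `β`, acting on the site `N-1`. -/
def Lright (N p : ℕ) (hN : 1 ≤ N) (β : ℝ)
    (f : (Fin (N+p) → Bool) → ℝ) (η : Fin (N+p) → Bool) : ℝ :=
  (β * (1 - occ (η ⟨N + p - 1, by omega⟩)) + (1 - β) * occ (η ⟨N + p - 1, by omega⟩)) *
    (f (flipCfg η ⟨N + p - 1, by omega⟩) - f η)

/-- The full generator `L_N = L_l + L_{0,1} + L_{b,N} + L_{r,N}` with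
`L_l = L_S + L_R + L_C + L_A`. -/
def LN (N p : ℕ) (hN : 2 ≤ N) (r α : Fin (p+1) → ℝ)
    (cR aR : Fin (p+1) → Fin (p+1) → ℝ) (β : ℝ)
    (f : (Fin (N+p) → Bool) → ℝ) (η : Fin (N+p) → Bool) : ℝ :=
  LS N p (by omega) f η + LR N p (by omega) r α f η + LC N p (by omega) cR f η
    + LA N p (by omega) aR f η + L01 N p hN f η + Lbulk N p f η
    + Lright N p (by omega) β f η

lemma occ_not (b : Bool) : occ (!b) = 1 - occ b := by
  cases b <;> simp [occ]

/-- Indexing sites by `ℕ` keeps bound proofs out of the site arithmetic. -/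
def occAt {n : ℕ} (η : Fin n → Bool) (i : ℕ) : ℝ :=
  if h : i < n then occ (η ⟨i, h⟩) else 0

lemma occ_eq_occAt {n : ℕ} (η : Fin n → Bool) {i : ℕ} (h : i < n) :
    occ (η ⟨i, h⟩) = occAt η i := by
  simp [occAt, h]

lemma occAt_val {n : ℕ} (η : Fin n → Bool) (a : Fin n) : occAt η a = occ (η a) := by
  simp [occAt]

lemma occAt_eq_zero {n : ℕ} (η : Fin n → Bool) {i : ℕ} (h : ¬i < n) : occAt η i = 0 := by
  simp [occAt, h]

lemma occAt_mul_self {n : ℕ} (η : Fin n → Bool) (i : ℕ) :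
    occAt η i * occAt η i = occAt η i := by
  simp only [occAt, occ]
  split_ifs <;> norm_num

lemma occAt_flipCfg {n : ℕ} (η : Fin n → Bool) (a : Fin n) (i : ℕ) :
    occAt (flipCfg η a) i = if i = a then 1 - occAt η i else occAt η i := by
  by_cases h : i < n
  · obtain ⟨s, rfl⟩ : ∃ s : Fin n, s.val = i := ⟨⟨i, h⟩, rfl⟩
    by_cases hs : s = a
    · simp [hs, occAt_val, flipCfg, occ_not]
    · simp [hs, occAt_val, flipCfg, Fin.val_inj]
  · have := a.isLt
    simp [occAt_eq_zero _ h, show i ≠ a by omega]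

lemma occAt_swapCfg {n : ℕ} (η : Fin n → Bool) (a b : Fin n) (i : ℕ) :
    occAt (swapCfg η a b) i
      = if i = a then occAt η b else if i = b then occAt η a else occAt η i := by
  by_cases h : i < n
  · obtain ⟨s, rfl⟩ : ∃ s : Fin n, s.val = i := ⟨⟨i, h⟩, rfl⟩
    simp only [occAt_val, swapCfg, Equiv.swap_apply_def, Fin.val_inj]
    split_ifs <;> rfl
  · have := a.isLt; have := b.isLt
    simp [occAt_eq_zero _ h, show i ≠ a by omega, show i ≠ b by omega]

lemma sum_ite_val_add_eq {n : ℕ} (t j : ℕ) (c : ℝ) :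
    ∑ k : Fin n, (if k.val + t = j then c else 0) = if t ≤ j ∧ j < n + t then c else 0 := by
  split_ifs with h
  · rw [Finset.sum_eq_single ⟨j - t, by omega⟩
      (fun k _ hk => if_neg fun e => hk (Fin.ext (show k.val = j - t by omega))) (by simp)]
    exact if_pos (Nat.sub_add_cancel h.1)
  · exact Finset.sum_eq_zero fun k _ => if_neg (by omega)

section Expectation

variable {S : Type*} [Fintype S] (μ : S → ℝ) (f g : S → ℝ)

lemma expVal_add : expVal μ (fun x => f x + g x) = expVal μ f + expVal μ g := by
  simp only [expVal, mul_add, Finset.sum_add_distrib]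

lemma expVal_sub : expVal μ (fun x => f x - g x) = expVal μ f - expVal μ g := by
  simp only [expVal, mul_sub, Finset.sum_sub_distrib]

lemma expVal_const_mul (c : ℝ) : expVal μ (fun x => c * f x) = c * expVal μ f := by
  simp only [expVal, Finset.mul_sum, mul_left_comm]

lemma expVal_const (hμ : ∑ x, μ x = 1) (c : ℝ) : expVal μ (fun _ : S => c) = c := by
  rw [expVal, ← Finset.sum_mul, hμ, one_mul]

end Expectation

section DiscreteHarmonic

variable {u : ℕ → ℝ} {n : ℕ}

lemma eq_affine_of_discrete_harmonic (h : ∀ m, m + 2 ≤ n → u m + u (m + 2) = 2 * u (m + 1)) :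
    ∀ k ≤ n, u k = u 0 + k * (u 1 - u 0) := by
  intro k hk
  induction k using Nat.strong_induction_on with
  | _ k ih =>
    match k with
    | 0 => simp
    | 1 => simp
    | k + 2 =>
      have hrec := h k hk
      rw [ih k (by omega) (by omega), ih (k + 1) (by omega) (by omega)] at hrec
      push_cast at hrec ⊢
      linear_combination hrec

lemma eq_interpolate_of_discrete_harmonic
    (h : ∀ m, m + 2 ≤ n → u m + u (m + 2) = 2 * u (m + 1)) {k : ℕ} (hk : k ≤ n)
    (hn : n ≠ 0) :
    u k = k / n * u n + (n - k) / n * u 0 := by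
  rw [eq_affine_of_discrete_harmonic h k hk, eq_affine_of_discrete_harmonic h n le_rfl]
  field_simp
  ring

end DiscreteHarmonic

/-- The right reservoir plays the role of a ghost site `N` of density `β`. -/
def extOcc (N p : ℕ) (β : ℝ) (η : Fin (N+p) → Bool) (k : ℕ) : ℝ :=
  if k < N then occAt η (k + p) else β

section Generator

variable (N p : ℕ) {i : ℕ} (η : Fin (N+p) → Bool)

lemma occAt_flipCfg_emb (hN : 1 ≤ N) (hi : p < i) (j : Fin (p+1)) :
    occAt (flipCfg η (emb N p hN j)) i = occAt η i := by
  have := j.isLt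
  simp [occAt_flipCfg, emb, show i ≠ j by omega]

lemma left_boundary_occAt_eq_zero (hN : 1 ≤ N) (hi : p < i) (r α : Fin (p+1) → ℝ)
    (cR aR : Fin (p+1) → Fin (p+1) → ℝ) :
    LS N p hN (fun η => occAt η i) η + LR N p hN r α (fun η => occAt η i) η
      + LC N p hN cR (fun η => occAt η i) η + LA N p hN aR (fun η => occAt η i) η = 0 := by
  have hLS : LS N p hN (fun η => occAt η i) η = 0 :=
    Finset.sum_eq_zero fun k _ => by
      have := k.isLt
      simp [occAt_swapCfg, show i ≠ k by omega, show i ≠ k + 1 by omega]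
  simp [hLS, LR, LC, LA, occAt_flipCfg_emb N p η hN hi]

lemma L01_occAt (hN : 2 ≤ N) (hi : p < i) :
    L01 N p hN (fun η => occAt η i) η
      = if i = p + 1 then occAt η (i - 1) - occAt η i else 0 := by
  simp only [L01, occAt_swapCfg, if_neg hi.ne']
  split_ifs with h
  · simp [h]
  · simp

lemma Lbulk_occAt :
    Lbulk N p (fun η => occAt η i) η
      = (if p + 1 ≤ i ∧ i < N - 2 + (p + 1) then occAt η (i + 1) - occAt η i else 0)
        + (if p + 2 ≤ i ∧ i < N - 2 + (p + 2) then occAt η (i - 1) - occAt η i else 0) := by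
  rw [← sum_ite_val_add_eq, ← sum_ite_val_add_eq, ← Finset.sum_add_distrib]
  refine Finset.sum_congr rfl fun k _ => ?_
  simp only [occAt_swapCfg]
  split_ifs <;> (try simp only [add_zero, zero_add, sub_self]) <;> first | omega | (congr 2; omega)

lemma Lright_occAt (hN : 1 ≤ N) (β : ℝ) :
    Lright N p hN β (fun η => occAt η i) η
      = if i = N + p - 1 then β - occAt η i else 0 := by
  split_ifs with h
  · subst h
    have hlast : N + p - 1 < N + p := by omega
    simp only [Lright, occAt_flipCfg, if_true, occ_eq_occAt η hlast]
    linear_combination (4 * β - 2) * occAt_mul_self η (N + p - 1)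
  · simp [Lright, occAt_flipCfg, h]

lemma LN_extOcc (hN : 2 ≤ N) (r α : Fin (p+1) → ℝ) (cR aR : Fin (p+1) → Fin (p+1) → ℝ)
    (β : ℝ) {m : ℕ} (hm : m + 1 < N) :
    LN N p hN r α cR aR β (fun η => extOcc N p β η (m + 1)) η
      = extOcc N p β η m + extOcc N p β η (m + 2) - 2 * extOcc N p β η (m + 1) := by
  have hf : (fun η => extOcc N p β η (m + 1)) = fun η => occAt η (m + 1 + p) :=
    funext fun η => if_pos hm
  have hi : p < m + 1 + p := by omega
  rw [hf, LN, left_boundary_occAt_eq_zero N p η _ hi, L01_occAt N p η hN hi, Lbulk_occAt,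
    Lright_occAt]
  simp only [extOcc, show m + 1 + p + 1 = m + 2 + p by omega, show m + 1 + p - 1 = m + p by omega]
  split_ifs <;> first | omega | ring

end Generator

lemma IsStationaryState.expVal_extOcc_harmonic {N p : ℕ} {hN : 2 ≤ N} {r α : Fin (p+1) → ℝ}
    {cR aR : Fin (p+1) → Fin (p+1) → ℝ} {β : ℝ} {μ : (Fin (N+p) → Bool) → ℝ}
    (hμ : IsStationaryState (LN N p hN r α cR aR β) μ) {m : ℕ} (hm : m + 2 ≤ N) :
    expVal μ (fun η => extOcc N p β η m) + expVal μ (fun η => extOcc N p β η (m + 2))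
      = 2 * expVal μ (fun η => extOcc N p β η (m + 1)) := by
  have h0 : expVal μ (fun η => LN N p hN r α cR aR β (fun η => extOcc N p β η (m + 1)) η)
      = 0 := hμ.2.2 _
  simp only [LN_extOcc N p _ hN r α cR aR β (show m + 1 < N by omega)] at h0
  rw [expVal_sub, expVal_add, expVal_const_mul] at h0
  linarith

/-- under the stationary state, the density profile is linear:
`ρ_N(k) = (k/N) β + ((N−k)/N) ρ_N(0)` for `0 ≤ k < N`. -/
theorem stmt6 (N p : ℕ) (hN : 2 ≤ N) (β : ℝ)
    (r α : Fin (p+1) → ℝ) (cR aR : Fin (p+1) → Fin (p+1) → ℝ)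
    (μ : (Fin (N+p) → Bool) → ℝ) (hμ : IsStationaryState (LN N p hN r α cR aR β) μ) :
    ∀ (k : ℕ) (hk : k < N),
      expVal μ (fun η => occ (η ⟨k + p, by omega⟩))
        = (k : ℝ) / N * β
          + ((N : ℝ) - k) / N * expVal μ (fun η => occ (η ⟨p, by omega⟩)) := by
  intro k hk
  set ρ : ℕ → ℝ := fun k => expVal μ (fun η => extOcc N p β η k) with hρ
  have hρ_lt : ∀ k < N, ρ k = expVal μ (fun η => occAt η (k + p)) := fun k hk => by
    simp only [hρ, extOcc, hk, if_true]
  have hρN : ρ N = β := by simp only [hρ, extOcc, lt_irrefl, if_false, expVal_const μ hμ.2.1]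
  simp only [occ_eq_occAt]
  have hρ0 : ρ 0 = expVal μ (fun η => occAt η p) := by
    simp only [hρ_lt 0 (by omega), zero_add]
  rw [← hρ_lt k hk, ← hρ0, ← hρN]
  exact eq_interpolate_of_discrete_harmonic
    (fun m hm => hμ.expVal_extOcc_harmonic (m := m) hm) hk.le (by omega)
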